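/- arXiv:1603.09330 — 2 statements merged into one kernel-verified Lean document; each statement's English description precedes it below -/
import Mathlib

section
/- Let F : C → C' be a weight-exact fully faithful exact functor between triangulated categories equipped with weight structures w and w'. Then an object M of C belongs to C_{w≤0} if and only if F(M) ∈ C'_{w'≤0}, and M ∈ C_{w≥0} if and only if F(M) ∈ C'_{w'≥0}. -/
open CategoryTheory CategoryTheory.Limits CategoryTheory.Pretriangulated

universe v u

/-- A weight structure on a (pre)triangulated category, in the homological convention. -/
structure WeightStructure (C : Type u) [Category.{v} C] [Preadditive C] [HasZeroObject C]
    [HasShift C ℤ] [∀ n : ℤ, (shiftFunctor C n).Additive] [Pretriangulated C] where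
  LE : Set C
  GE : Set C
  retract_LE : ∀ ⦃X Y : C⦄, Y ∈ LE → ∀ (i : X ⟶ Y) (r : Y ⟶ X), i ≫ r = 𝟙 X → X ∈ LE
  retract_GE : ∀ ⦃X Y : C⦄, Y ∈ GE → ∀ (i : X ⟶ Y) (r : Y ⟶ X), i ≫ r = 𝟙 X → X ∈ GE
  shift_LE : ∀ ⦃X : C⦄, X ∈ LE → X⟦(-1 : ℤ)⟧ ∈ LE
  shift_GE : ∀ ⦃X : C⦄, X ∈ GE → X⟦(1 : ℤ)⟧ ∈ GE
  orth : ∀ ⦃X Y : C⦄, X ∈ LE → Y ∈ GE → ∀ f : X ⟶ Y⟦(1 : ℤ)⟧, f = 0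
  decomp : ∀ M : C, ∃ (X Y : C) (f : X ⟶ M) (g : M ⟶ Y) (h : Y ⟶ X⟦(1 : ℤ)⟧),
    (Triangle.mk f g h ∈ distTriang C) ∧ X ∈ LE ∧ Y⟦(-1 : ℤ)⟧ ∈ GE

variable {C : Type u} [Category.{v} C] [Preadditive C] [HasZeroObject C]
    [HasShift C ℤ] [∀ n : ℤ, (shiftFunctor C n).Additive] [Pretriangulated C]

/-- `C_{w ≤ n} = C_{w ≤ 0}[n]`. -/
def WeightStructure.LEdeg (w : WeightStructure C) (n : ℤ) : Set C := {X | X⟦(-n)⟧ ∈ w.LE}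

/-- `C_{w ≥ n} = C_{w ≥ 0}[n]`. -/
def WeightStructure.GEdeg (w : WeightStructure C) (n : ℤ) : Set C := {X | X⟦(-n)⟧ ∈ w.GE}

variable {C' : Type*} [Category C'] [Preadditive C'] [HasZeroObject C']
    [HasShift C' ℤ] [∀ n : ℤ, (shiftFunctor C' n).Additive] [Pretriangulated C']

/-!
Each class of a weight structure is the orthogonal of the other: in a weight decomposition of `M`
(resp. of `M[1]`) the map that orthogonality kills splits the triangle and exhibits `M` as a
retract of an object of the right class. A faithful additive functor commuting with shifts
reflects the vanishing of maps `X ⟶ Y[1]`, so by weight-exactness `F(M)` satisfying the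
orthogonality condition in `C'` forces `M` to satisfy it in `C`.
-/

theorem CategoryTheory.Functor.map_comp_commShiftIso_hom_app_eq_zero_iff
    {D E A : Type*} [Category D] [Category E] [AddMonoid A] [HasShift D A] [HasShift E A]
    [HasZeroMorphisms D] [Preadditive E] (F : D ⥤ E) [F.CommShift A]
    [F.PreservesZeroMorphisms] [F.Faithful] {X Y : D} {a : A} (f : X ⟶ Y⟦a⟧) :
    F.map f ≫ (F.commShiftIso a).hom.app Y = 0 ↔ f = 0 :=
  (Preadditive.IsIso.comp_right_eq_zero _ _).trans F.map_eq_zero_iff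

namespace WeightStructure

variable (w : WeightStructure C)

theorem mem_LE_of_retract {X Y : C} (h : Retract X Y) (hY : Y ∈ w.LE) : X ∈ w.LE :=
  w.retract_LE hY h.i h.r h.retract

theorem mem_GE_of_retract {X Y : C} (h : Retract X Y) (hY : Y ∈ w.GE) : X ∈ w.GE :=
  w.retract_GE hY h.i h.r h.retract

theorem mem_LE_iff_orth (M : C) : M ∈ w.LE ↔ ∀ Y ∈ w.GE, ∀ f : M ⟶ Y⟦(1 : ℤ)⟧, f = 0 := by
  refine ⟨fun hM _ hY => w.orth hM hY, fun hM => ?_⟩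
  obtain ⟨X, Y, f, g, h, hT, hX, hY⟩ := w.decomp M
  -- `g` followed by `Y ≅ (Y⟦-1⟧)⟦1⟧` is a map into the shift of an object of `C_{w≥0}`
  have hg : g = 0 := (Preadditive.IsIso.comp_right_eq_zero g
    ((shiftFunctorCompIsoId C (-1 : ℤ) 1 (by norm_num)).inv.app Y)).1 (hM _ hY _)
  obtain ⟨r, hr⟩ := Triangle.coyoneda_exact₂ _ hT (𝟙 M)
    (by simp only [Triangle.mk_mor₂, hg]; exact comp_zero)
  exact w.mem_LE_of_retract ⟨r, f, hr.symm⟩ hX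

theorem mem_GE_iff_orth (M : C) : M ∈ w.GE ↔ ∀ X ∈ w.LE, ∀ f : X ⟶ M⟦(1 : ℤ)⟧, f = 0 := by
  refine ⟨fun hM _ hX => w.orth hX hM, fun hM => ?_⟩
  obtain ⟨X, Y, f, g, h, hT, hX, hY⟩ := w.decomp (M⟦(1 : ℤ)⟧)
  obtain ⟨r, hr⟩ := Triangle.yoneda_exact₂ _ hT (𝟙 _)
    (by simp only [Triangle.mk_mor₁, hM X hX f]; exact zero_comp)
  have hM₁ : Retract (M⟦(1 : ℤ)⟧) Y := ⟨g, r, hr.symm⟩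
  exact w.mem_GE_of_retract
    ((Retract.ofIso ((shiftFunctorCompIsoId C (1 : ℤ) (-1) (by norm_num)).symm.app M)).trans
      (hM₁.map (shiftFunctor C (-1 : ℤ)))) hY

end WeightStructure

theorem weight_exact_embedding_detects_weights_general
    (w : WeightStructure C) (w' : WeightStructure C')
    (F : C ⥤ C') [F.CommShift ℤ] [F.IsTriangulated] [F.Faithful]
    (hLE : ∀ M ∈ w.LE, F.obj M ∈ w'.LE) (hGE : ∀ M ∈ w.GE, F.obj M ∈ w'.GE) :
    ∀ M : C, (M ∈ w.LE ↔ F.obj M ∈ w'.LE) ∧ (M ∈ w.GE ↔ F.obj M ∈ w'.GE) := by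
  intro M
  refine ⟨⟨hLE M, fun hM => ?_⟩, ⟨hGE M, fun hM => ?_⟩⟩
  · refine (w.mem_LE_iff_orth M).2 fun Y hY f => ?_
    exact (F.map_comp_commShiftIso_hom_app_eq_zero_iff f).1 (w'.orth hM (hGE Y hY) _)
  · refine (w.mem_GE_iff_orth M).2 fun X hX f => ?_
    exact (F.map_comp_commShiftIso_hom_app_eq_zero_iff f).1 (w'.orth (hLE X hX) hM _)

/-- A weight-exact fully faithful exact functor detects the classes of a weight structure:
`M ∈ C_{w≤0}` iff `F(M) ∈ C'_{w'≤0}`, and `M ∈ C_{w≥0}` iff `F(M) ∈ C'_{w'≥0}`. -/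
theorem weight_exact_embedding_detects_weights
    (w : WeightStructure C) (w' : WeightStructure C')
    (F : C ⥤ C') [F.CommShift ℤ] [F.IsTriangulated] [F.Full] [F.Faithful]
    (hLE : ∀ M ∈ w.LE, F.obj M ∈ w'.LE) (hGE : ∀ M ∈ w.GE, F.obj M ∈ w'.GE) :
    ∀ M : C, (M ∈ w.LE ↔ F.obj M ∈ w'.LE) ∧ (M ∈ w.GE ↔ F.obj M ∈ w'.GE) :=
  weight_exact_embedding_detects_weights_general w w' F hLE hGE
end

section
/- Let C be a triangulated category with a weight structure w, D ⊆ C a triangulated subcategory on which w restricts to a weight structure (i.e., Obj D ∩ C_{w≤0} and Obj D ∩ C_{w≥0} form a weight structure on D), and suppose the Verdier quotient π : C → C/D exists and carries the induced weight structure whose ≤0 and ≥0 parts are the retract-closures of π(C_{w≤0}) and π(C_{w≥0}). Then for any M ∈ C_{w≤0} and N ∈ C_{w≥0}, the map C(M,N) → (C/D)(π(M), π(N)) is surjective. -/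
open CategoryTheory CategoryTheory.Limits CategoryTheory.Pretriangulated

universe v u

variable {C : Type u} [Category.{v} C] [Preadditive C] [HasZeroObject C]
    [HasShift C ℤ] [∀ n : ℤ, (shiftFunctor C n).Additive] [Pretriangulated C]

variable {C' : Type*} [Category C'] [Preadditive C'] [HasZeroObject C']
    [HasShift C' ℤ] [∀ n : ℤ, (shiftFunctor C' n).Additive] [Pretriangulated C']

/-- The class of morphisms whose cone lies in a class of objects `D`. Inverting it realizes
the Verdier quotient by the triangulated subcategory on `D`. -/
def coneIn (D : Set C) : MorphismProperty C := fun _ _ f =>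
  ∃ (Z : C) (g : _ ⟶ Z) (h : Z ⟶ _⟦(1 : ℤ)⟧),
    (Triangle.mk f g h ∈ distTriang C) ∧ Z ∈ D

/-!
Every morphism `π M ⟶ π N` of the localization is a zigzag of images of morphisms of `C` and
inverses of images of morphisms with cone in `D`. Reading the zigzag from a source of weights
`≤ 0`, each inverted morphism can be replaced, by the Ore condition and the weight decomposition
of its cone inside `D`, by a morphism `σ : L ⟶ X` with `L ∈ C_{w≤0}` and cone
`A ∈ D ∩ C_{w≤0}`. As `C(A⟦-1⟧, N) = 0` for `N ∈ C_{w≥0}`, every morphism `L ⟶ N` extends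
along `σ` already in `C`, so the whole zigzag collapses to a morphism of `C`.
-/

namespace WeightStructure

variable (w : WeightStructure C)

lemma hom_eq_zero_of_shift_mem_GE {X Y : C} (hX : X ∈ w.LE) (hY : Y⟦(-1 : ℤ)⟧ ∈ w.GE)
    (f : X ⟶ Y) : f = 0 :=
  (cancel_mono (shiftNegShift Y (1 : ℤ)).inv).1 (by rw [zero_comp]; exact w.orth hX hY _)

lemma hom_from_shift_neg_one_eq_zero {X Y : C} (hX : X ∈ w.LE) (hY : Y ∈ w.GE)
    (f : X⟦(-1 : ℤ)⟧ ⟶ Y) : f = 0 := by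
  have h : f⟦(1 : ℤ)⟧' = 0 :=
    (cancel_epi (shiftNegShift X (1 : ℤ)).inv).1 (by rw [comp_zero]; exact w.orth hX hY _)
  exact (shiftFunctor C (1 : ℤ)).map_injective (by simpa using h)

lemma mem_LE_of_forall_hom_eq_zero {X : C}
    (h : ∀ Y ∈ w.GE, ∀ f : X ⟶ Y⟦(1 : ℤ)⟧, f = 0) : X ∈ w.LE := by
  obtain ⟨A, B, a, b, c, hT, hA, hB⟩ := w.decomp X
  have hb : b = 0 :=
    (cancel_mono (shiftNegShift B (1 : ℤ)).inv).1 (by rw [zero_comp]; exact h _ hB _)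
  obtain ⟨s, hs⟩ := Triangle.coyoneda_exact₂ _ hT (𝟙 X) ((Category.id_comp b).trans hb)
  exact w.retract_LE hA s a hs.symm

lemma mem_LE_of_distTriang (T : Triangle C) (hT : T ∈ distTriang C)
    (h₁ : T.obj₁ ∈ w.LE) (h₃ : T.obj₃ ∈ w.LE) : T.obj₂ ∈ w.LE := by
  refine w.mem_LE_of_forall_hom_eq_zero fun Y hY f => ?_
  obtain ⟨g, rfl⟩ := Triangle.yoneda_exact₂ _ hT f (w.orth h₁ hY _)
  rw [w.orth h₃ hY g, comp_zero]

lemma exists_comp_eq_of_coneIn_LE {L X N : C} (σ : L ⟶ X) (hσ : coneIn w.LE σ)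
    (hN : N ∈ w.GE) (f : L ⟶ N) : ∃ f' : X ⟶ N, σ ≫ f' = f := by
  obtain ⟨A, g, h, hT, hA⟩ := hσ
  obtain ⟨f', hf'⟩ := Triangle.yoneda_exact₂ _ (inv_rot_of_distTriang _ hT) f
    (w.hom_from_shift_neg_one_eq_zero hA hN _)
  exact ⟨f', hf'.symm⟩

end WeightStructure

lemma coneIn_mono {D D' : Set C} (h : D ⊆ D') {X Y : C} {f : X ⟶ Y} (hf : coneIn D f) :
    coneIn D' f := by
  obtain ⟨Z, g, k, hT, hZ⟩ := hf
  exact ⟨Z, g, k, hT, h hZ⟩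

lemma exists_coneIn_comp_eq_comp (D : Set C) {U Y X : C} (s : U ⟶ Y) (hs : coneIn D s)
    (g : X ⟶ Y) : ∃ (X' : C) (s' : X' ⟶ X) (g' : X' ⟶ U), coneIn D s' ∧ s' ≫ g = g' ≫ s := by
  obtain ⟨Z, p, d, hT, hZ⟩ := hs
  obtain ⟨X', s', d', hT'⟩ := distinguished_cocone_triangle₁ (g ≫ p)
  obtain ⟨g', hg', -⟩ :=
    complete_distinguished_triangle_morphism₁ _ _ hT' hT g (𝟙 Z) (Category.comp_id _)
  exact ⟨X', s', g', ⟨Z, g ≫ p, d', hT', hZ⟩, hg'⟩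

lemma exists_coneIn_inter_LE_factor (w : WeightStructure C) (D : Set C)
    (hres : ∀ M ∈ D, ∃ (X Y : C) (f : X ⟶ M) (g : M ⟶ Y) (h : Y ⟶ X⟦(1 : ℤ)⟧),
      (Triangle.mk f g h ∈ distTriang C) ∧ X ∈ D ∩ w.LE ∧ Y ∈ D ∧ Y⟦(-1 : ℤ)⟧ ∈ w.GE)
    {X' X : C} (s : X' ⟶ X) (hs : coneIn D s) (hX : X ∈ w.LE) :
    ∃ (L : C) (σ : L ⟶ X) (l : L ⟶ X'), L ∈ w.LE ∧ coneIn (D ∩ w.LE) σ ∧ l ≫ s = σ := by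
  obtain ⟨Z, p, d, hT, hZ⟩ := hs
  obtain ⟨A, B, a, b, c, hTZ, hA, -, hB⟩ := hres Z hZ
  -- `p : X ⟶ Z` factors through `a : A ⟶ Z` because `C(X, B) = 0`
  obtain ⟨q, hq⟩ : ∃ q : X ⟶ A, p = q ≫ a :=
    Triangle.coyoneda_exact₂ _ hTZ p (w.hom_eq_zero_of_shift_mem_GE hX hB _)
  obtain ⟨L, σ, e, hTL⟩ := distinguished_cocone_triangle₁ q
  have hσq : σ ≫ q = 0 := comp_distTriang_mor_zero₁₂ _ hTL
  have hσp : σ ≫ p = 0 := by rw [hq, reassoc_of% hσq, zero_comp]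
  obtain ⟨l, hl⟩ := Triangle.coyoneda_exact₂ _ hT σ hσp
  have hL : L ∈ w.LE :=
    w.mem_LE_of_distTriang _ (inv_rot_of_distTriang _ hTL) (w.shift_LE hA.2) hX
  exact ⟨L, σ, l, hL, ⟨A, q, e, hTL, hA⟩, hl.symm⟩

lemma exists_map_eq_comp_of_isLocalization (w : WeightStructure C) (D : Set C)
    (hres : ∀ M ∈ D, ∃ (X Y : C) (f : X ⟶ M) (g : M ⟶ Y) (h : Y ⟶ X⟦(1 : ℤ)⟧),
      (Triangle.mk f g h ∈ distTriang C) ∧ X ∈ D ∩ w.LE ∧ Y ∈ D ∧ Y⟦(-1 : ℤ)⟧ ∈ w.GE)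
    {E : Type*} [Category E] (π : C ⥤ E) [π.IsLocalization (coneIn D)] {N : C} (hN : N ∈ w.GE)
    (φ : CostructuredArrow π (π.obj N)) {X : C} (hX : X ∈ w.LE) (g : X ⟶ φ.left) :
    ∃ f : X ⟶ N, π.map f = π.map g ≫ φ.hom := by
  induction φ using Localization.induction_costructuredArrow π (coneIn D) generalizing X with
  | hP₀ => exact ⟨g, by simp⟩
  | hP₁ f φ hφ =>
    obtain ⟨f', hf'⟩ := hφ hX (g ≫ f)
    exact ⟨f', by simpa using hf'⟩
  | hP₂ s hs φ hφ =>
    obtain ⟨X', s', g', hs', hsq⟩ := exists_coneIn_comp_eq_comp D s hs g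
    obtain ⟨L, σ, l, hL, hσ, rfl⟩ := exists_coneIn_inter_LE_factor w D hres s' hs' hX
    obtain ⟨f₂, hf₂⟩ := hφ hL (l ≫ g')
    obtain ⟨f, rfl⟩ :=
      w.exists_comp_eq_of_coneIn_LE _ (coneIn_mono Set.inter_subset_right hσ) hN f₂
    have : IsIso (π.map (l ≫ s')) :=
      Localization.inverts π (coneIn D) _ (coneIn_mono Set.inter_subset_left hσ)
    refine ⟨f, (cancel_epi (π.map (l ≫ s'))).1 ?_⟩
    rw [← π.map_comp, hf₂, ← π.map_comp_assoc, Category.assoc, hsq]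
    simp

theorem hom_surjective_onto_verdier_quotient_general
    (w : WeightStructure C) (D : Set C)
    -- `w` restricts to a weight structure on `D`:
    (hres : ∀ M ∈ D, ∃ (X Y : C) (f : X ⟶ M) (g : M ⟶ Y) (h : Y ⟶ X⟦(1 : ℤ)⟧),
      (Triangle.mk f g h ∈ distTriang C) ∧ X ∈ D ∩ w.LE ∧ Y ∈ D ∧ Y⟦(-1 : ℤ)⟧ ∈ w.GE)
    -- the Verdier quotient functor:
    (π : C ⥤ C') [π.IsLocalization (coneIn D)] :
    ∀ (M N : C), M ∈ w.LE → N ∈ w.GE →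
      ∀ φ : π.obj M ⟶ π.obj N, ∃ f : M ⟶ N, π.map f = φ := by
  intro M N hM hN φ
  obtain ⟨f, hf⟩ :=
    exists_map_eq_comp_of_isLocalization w D hres π hN (CostructuredArrow.mk φ) hM (𝟙 M)
  exact ⟨f, by simpa using hf⟩

/-- If `w` restricts to a weight structure on a triangulated subcategory `D`, and the Verdier
quotient `π : C → C/D` carries the induced weight structure (whose two classes are the
retract-closures of the images of `C_{w≤0}` and `C_{w≥0}`), then for `M ∈ C_{w≤0}` and
`N ∈ C_{w≥0}` the map `C(M,N) → (C/D)(πM, πN)` is surjective. -/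
theorem hom_surjective_onto_verdier_quotient
    (w : WeightStructure C) (D : Set C)
    -- `D` is a (strict full) triangulated subcategory:
    (hshift : ∀ n : ℤ, ∀ X ∈ D, X⟦n⟧ ∈ D)
    (hext : ∀ T : Triangle C, (T ∈ distTriang C) → T.obj₁ ∈ D → T.obj₃ ∈ D → T.obj₂ ∈ D)
    -- `w` restricts to a weight structure on `D`:
    (hres : ∀ M ∈ D, ∃ (X Y : C) (f : X ⟶ M) (g : M ⟶ Y) (h : Y ⟶ X⟦(1 : ℤ)⟧),
      (Triangle.mk f g h ∈ distTriang C) ∧ X ∈ D ∩ w.LE ∧ Y ∈ D ∧ Y⟦(-1 : ℤ)⟧ ∈ w.GE)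
    -- the Verdier quotient functor:
    (π : C ⥤ C') [π.CommShift ℤ] [π.IsTriangulated] [π.IsLocalization (coneIn D)]
    -- the induced weight structure on the quotient:
    (w' : WeightStructure C')
    (hLE' : w'.LE = {A : C' | ∃ M ∈ w.LE, ∃ (i : A ⟶ π.obj M) (r : π.obj M ⟶ A), i ≫ r = 𝟙 A})
    (hGE' : w'.GE = {A : C' | ∃ M ∈ w.GE, ∃ (i : A ⟶ π.obj M) (r : π.obj M ⟶ A), i ≫ r = 𝟙 A}) :
    ∀ (M N : C), M ∈ w.LE → N ∈ w.GE →
      ∀ φ : π.obj M ⟶ π.obj N, ∃ f : M ⟶ N, π.map f = φ :=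
  hom_surjective_onto_verdier_quotient_general w D hres π
end
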